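/- arXiv:1901.05925 — 2 statements merged into one kernel-verified Lean document; each statement's English description precedes it below -/
import Mathlib

section
/- Let G = (V, E) be a finite simple graph with maximum degree Δ ≥ 1, f : 2^E → ℝ≥0 normalized, monotone and submodular, and b, k positive integers. Suppose S ⊆ V is obtained by greedily selecting vertices (maximizing marginal gain of h(S) = f(edges(S))) with |S| ≥ min(b, ⌊k/Δ⌋) and |S| ≤ b and |edges(S)| ≤ k. Then f(edges(S)) ≥ (1 - exp(-min{b, ⌊k/Δ⌋}/b)) · OPT₁, where OPT₁ = max { f(F) : F ⊆ E, |F| ≤ k, ∃ vertex cover C of F with |C| ≤ b }. -/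
open Finset
open scoped Classical

variable {V : Type*} [Fintype V] [DecidableEq V]

/-- The set of edges of `G` incident to at least one vertex of `S`. -/
def edgesOf (G : SimpleGraph V) [DecidableRel G.Adj] (S : Finset V) : Finset (Sym2 V) :=
  G.edgeFinset.filter (fun e => ∃ v ∈ S, v ∈ e)

/-- `C` is a vertex cover of the edge set `F`. -/
def IsVertexCover (C : Finset V) (F : Finset (Sym2 V)) : Prop :=
  ∀ e ∈ F, ∃ v ∈ C, v ∈ e

/-- `gF G f k S`: maximum of `f F` over `F ⊆ edgesOf G S` with `|F| ≤ k` (inner problem of P₂). -/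
noncomputable def gF (G : SimpleGraph V) [DecidableRel G.Adj] (f : Finset (Sym2 V) → ℝ)
    (k : ℕ) (S : Finset V) : ℝ :=
  ((edgesOf G S).powerset.filter (fun F => F.card ≤ k)).sup' ⟨∅, by simp⟩ f

/-- Optimal value of problem P₁: maximize `f F` over `F ⊆ E` with `|F| ≤ k` admitting a
vertex cover of size at most `b`. -/
noncomputable def OPT1 (G : SimpleGraph V) [DecidableRel G.Adj] (f : Finset (Sym2 V) → ℝ)
    (k b : ℕ) : ℝ :=
  (G.edgeFinset.powerset.filter
      (fun F => F.card ≤ k ∧ ∃ C : Finset V, C.card ≤ b ∧ IsVertexCover C F)).sup'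
    ⟨∅, by
      refine mem_filter.mpr ⟨mem_powerset.mpr (empty_subset _), by simp, ⟨∅, by simp, ?_⟩⟩
      intro e he
      exact absurd he (Finset.notMem_empty e)⟩ f

/-- Optimal value of problem P₂: maximize `gF G f k S` over `S ⊆ V` with `|S| ≤ b`. -/
noncomputable def OPT2 (G : SimpleGraph V) [DecidableRel G.Adj] (f : Finset (Sym2 V) → ℝ)
    (k b : ℕ) : ℝ :=
  ((univ : Finset V).powerset.filter (fun S => S.card ≤ b)).sup' ⟨∅, by simp⟩ (gF G f k)

/-!
Set `h S = f (edgesOf G S)`; it is monotone and submodular because `f` is and because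
`edgesOf G` sends unions to unions and intersections into intersections. Every feasible `F`
of P₁ is covered by some `C` with `|C| ≤ b`, so `OPT₁ ≤ h C`. Against such a `C`, a greedy step
from `A` closes at least a `1/b` fraction of the gap `h C - h A`, since by submodularity the
gap is at most the sum of the `|C| ≤ b` single-vertex marginal gains, each at most the greedy
gain. After `t = |S| ≥ min(b, ⌊k/Δ⌋)` steps the gap is at most `(1 - 1/b)^t h C ≤ e^{-t/b} h C`.
-/

theorem le_pow_mul_of_forall_succ_le_mul {g : ℕ → ℝ} {q : ℝ} (hq : 0 ≤ q) {t : ℕ}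
    (hg : ∀ i < t, g (i + 1) ≤ q * g i) : g t ≤ q ^ t * g 0 := by
  induction t with
  | zero => simp
  | succ t ih =>
    calc g (t + 1) ≤ q * g t := hg t t.lt_succ_self
      _ ≤ q * (q ^ t * g 0) := by
        gcongr
        exact ih fun i hi => hg i (hi.trans t.lt_succ_self)
      _ = q ^ (t + 1) * g 0 := by ring

theorem one_sub_inv_pow_le_exp_neg_div (b t : ℕ) :
    (1 - (b : ℝ)⁻¹) ^ t ≤ Real.exp (-(t : ℝ) / b) :=
  calc (1 - (b : ℝ)⁻¹) ^ t ≤ Real.exp (-(b : ℝ)⁻¹) ^ t :=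
        pow_le_pow_left₀ (sub_nonneg.mpr (Nat.cast_inv_le_one b))
          (by linarith [Real.add_one_le_exp (-(b : ℝ)⁻¹)]) t
    _ = Real.exp (-(t : ℝ) / b) := by
      rw [← Real.exp_nat_mul]
      ring_nf

section Submodular

variable {α : Type*} [DecidableEq α]

def IsSubmodular (h : Finset α → ℝ) : Prop :=
  ∀ A B, h (A ∪ B) + h (A ∩ B) ≤ h A + h B

def IsGreedyStep (h : Finset α → ℝ) (A A' : Finset α) : Prop :=
  ∃ a ∉ A, A' = insert a A ∧ ∀ a' ∉ A, h (insert a' A) ≤ h (insert a A)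

variable {h : Finset α → ℝ}

theorem IsSubmodular.marginal_antitone (hsub : IsSubmodular h) (hmono : Monotone h)
    {B C : Finset α} (hBC : B ⊆ C) (v : α) :
    h (insert v C) - h C ≤ h (insert v B) - h B := by
  by_cases hvC : v ∈ C
  · rw [insert_eq_of_mem hvC, sub_self, sub_nonneg]
    exact hmono (subset_insert v B)
  · have hunion : insert v B ∪ C = insert v C := by
      rw [insert_union, union_eq_right.mpr hBC]
    have hinter : insert v B ∩ C = B := by
      rw [insert_inter_of_notMem hvC, inter_eq_left.mpr hBC]
    have := hsub (insert v B) C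
    rw [hunion, hinter] at this
    linarith

theorem IsSubmodular.sub_le_sum_marginal (hsub : IsSubmodular h) (hmono : Monotone h)
    (B D : Finset α) : h (B ∪ D) - h B ≤ ∑ v ∈ D, (h (insert v B) - h B) := by
  induction D using Finset.induction_on with
  | empty => simp
  | insert v D hvD ih =>
    rw [sum_insert hvD, union_insert]
    linarith [hsub.marginal_antitone hmono (subset_union_left : B ⊆ B ∪ D) v]

theorem IsGreedyStep.sub_le_mul_gain (hsub : IsSubmodular h) (hmono : Monotone h)
    {A A' : Finset α} (hstep : IsGreedyStep h A A') {C : Finset α} {b : ℕ} (hC : C.card ≤ b) :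
    h C - h A ≤ b * (h A' - h A) := by
  obtain ⟨a, haA, rfl, hbest⟩ := hstep
  have hgain : 0 ≤ h (insert a A) - h A := sub_nonneg.mpr (hmono (subset_insert a A))
  have hmarginal : ∀ v ∈ C, h (insert v A) - h A ≤ h (insert a A) - h A := by
    intro v _
    by_cases hvA : v ∈ A
    · rwa [insert_eq_of_mem hvA, sub_self]
    · exact sub_le_sub_right (hbest v hvA) _
  calc h C - h A ≤ h (A ∪ C) - h A := sub_le_sub_right (hmono subset_union_right) _
    _ ≤ ∑ v ∈ C, (h (insert v A) - h A) := hsub.sub_le_sum_marginal hmono A C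
    _ ≤ C.card • (h (insert a A) - h A) := sum_le_card_nsmul _ _ _ hmarginal
    _ ≤ b * (h (insert a A) - h A) := by
      rw [nsmul_eq_mul]
      gcongr

theorem card_of_isGreedyStep {A : ℕ → Finset α} (hA0 : A 0 = ∅) {t : ℕ}
    (hstep : ∀ i < t, IsGreedyStep h (A i) (A (i + 1))) : (A t).card = t := by
  induction t with
  | zero => simp [hA0]
  | succ t ih =>
    obtain ⟨a, haA, hA, -⟩ := hstep t t.lt_succ_self
    rw [hA, card_insert_of_notMem haA, ih fun i hi => hstep i (hi.trans t.lt_succ_self)]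

theorem one_sub_exp_mul_le_of_isGreedyStep (hsub : IsSubmodular h) (hmono : Monotone h)
    (h0 : h ∅ = 0) {b t : ℕ} (hb : 0 < b)
    {A : ℕ → Finset α} (hA0 : A 0 = ∅) (hstep : ∀ i < t, IsGreedyStep h (A i) (A (i + 1)))
    {C : Finset α} (hC : C.card ≤ b) :
    (1 - Real.exp (-(t : ℝ) / b)) * h C ≤ h (A t) := by
  have hgap : ∀ i < t, h C - h (A (i + 1)) ≤ (1 - (b : ℝ)⁻¹) * (h C - h (A i)) := by
    intro i hi
    have hgain : (h C - h (A i)) / b ≤ h (A (i + 1)) - h (A i) := by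
      rw [div_le_iff₀ (by exact_mod_cast hb)]
      linarith [(hstep i hi).sub_le_mul_gain hsub hmono hC]
    linarith [show (1 - (b : ℝ)⁻¹) * (h C - h (A i)) = h C - h (A i) - (h C - h (A i)) / b by
      ring]
  have hgap_t : h C - h (A t) ≤ (1 - (b : ℝ)⁻¹) ^ t * h C := by
    simpa only [hA0, h0, sub_zero] using le_pow_mul_of_forall_succ_le_mul
      (g := fun i => h C - h (A i)) (sub_nonneg.mpr (Nat.cast_inv_le_one b)) hgap
  have hC0 : 0 ≤ h C := h0 ▸ hmono (empty_subset C)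
  calc (1 - Real.exp (-(t : ℝ) / b)) * h C = h C - Real.exp (-(t : ℝ) / b) * h C := by ring
    _ ≤ h C - (1 - (b : ℝ)⁻¹) ^ t * h C := by
      gcongr
      exact one_sub_inv_pow_le_exp_neg_div b t
    _ ≤ h (A t) := by linarith

end Submodular

theorem edgesOf_mono (G : SimpleGraph V) [DecidableRel G.Adj] : Monotone (edgesOf G) := by
  intro S T hST e
  simp only [edgesOf, mem_filter]
  exact And.imp_right fun ⟨v, hv, hve⟩ => ⟨v, hST hv, hve⟩

theorem edgesOf_union (G : SimpleGraph V) [DecidableRel G.Adj] (S T : Finset V) :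
    edgesOf G (S ∪ T) = edgesOf G S ∪ edgesOf G T := by
  ext e
  simp only [edgesOf, mem_filter, mem_union, or_and_right, exists_or, and_or_left]

theorem IsSubmodular.comp_edgesOf {f : Finset (Sym2 V) → ℝ} (hsub : IsSubmodular f)
    (hmono : Monotone f) (G : SimpleGraph V) [DecidableRel G.Adj] :
    IsSubmodular fun S => f (edgesOf G S) := by
  intro S T
  have hinter : edgesOf G (S ∩ T) ⊆ edgesOf G S ∩ edgesOf G T :=
    subset_inter (edgesOf_mono G inter_subset_left) (edgesOf_mono G inter_subset_right)
  have := hsub (edgesOf G S) (edgesOf G T)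
  simp only [edgesOf_union]
  linarith [hmono hinter]

theorem exists_card_le_OPT1_le (G : SimpleGraph V) [DecidableRel G.Adj]
    {f : Finset (Sym2 V) → ℝ} (hmono : Monotone f) (k b : ℕ) :
    ∃ C : Finset V, C.card ≤ b ∧ OPT1 G f k b ≤ f (edgesOf G C) := by
  obtain ⟨F, hF, hOPT⟩ : ∃ F ∈ _, OPT1 G f k b = f F := exists_mem_eq_sup' _ f
  obtain ⟨hFE, -, C, hCb, hcover⟩ := by simpa only [mem_filter, mem_powerset] using hF
  refine ⟨C, hCb, hOPT ▸ hmono fun e he => ?_⟩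
  exact mem_filter.mpr ⟨hFE he, hcover e he⟩

omit [DecidableEq V] in
theorem OPT1_nonneg (G : SimpleGraph V) [DecidableRel G.Adj] {f : Finset (Sym2 V) → ℝ}
    (hf0 : f ∅ = 0) (k b : ℕ) : 0 ≤ OPT1 G f k b := by
  unfold OPT1
  exact hf0 ▸ le_sup' f (mem_filter.mpr ⟨empty_mem_powerset _, Nat.zero_le _, ∅, Nat.zero_le _,
    fun e he => absurd he (notMem_empty e)⟩)

theorem stmt_18_general (G : SimpleGraph V) [DecidableRel G.Adj] (f : Finset (Sym2 V) → ℝ)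
    (hnorm : f ∅ = 0)
    (hmono : ∀ A B : Finset (Sym2 V), A ⊆ B → f A ≤ f B)
    (hsub : ∀ A B : Finset (Sym2 V), f A + f B ≥ f (A ∪ B) + f (A ∩ B))
    (b k : ℕ) (hb : 0 < b)
    (t : ℕ) (A : ℕ → Finset V) (hA0 : A 0 = ∅)
    (hstep : ∀ i < t, ∃ a ∉ A i, A (i + 1) = insert a (A i) ∧
      ∀ a' ∉ A i, f (edgesOf G (insert a' (A i))) ≤ f (edgesOf G (insert a (A i))))
    (S : Finset V) (hSt : S = A t)
    (hcard_lb : min b (k / G.maxDegree) ≤ S.card) :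
    f (edgesOf G S) ≥
      (1 - Real.exp (-((min b (k / G.maxDegree) : ℕ) : ℝ) / b)) * OPT1 G f k b := by
  have hf : Monotone f := hmono
  have hsteps : min b (k / G.maxDegree) ≤ t :=
    card_of_isGreedyStep (h := fun S => f (edgesOf G S)) hA0 hstep ▸ hSt ▸ hcard_lb
  obtain ⟨C, hCb, hOPT⟩ := exists_card_le_OPT1_le G hf k b
  have hgreedy := one_sub_exp_mul_le_of_isGreedyStep (IsSubmodular.comp_edgesOf hsub hf G)
    (hf.comp (edgesOf_mono G)) (by simp [edgesOf, hnorm]) hb hA0 hstep hCb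
  have hfactor : 0 ≤ 1 - Real.exp (-(t : ℝ) / b) := by
    rw [sub_nonneg, Real.exp_le_one_iff]
    exact div_nonpos_of_nonpos_of_nonneg (by simp) (by positivity)
  rw [hSt, ge_iff_le]
  calc _ ≤ (1 - Real.exp (-(t : ℝ) / b)) * OPT1 G f k b := by
        gcongr
        exact OPT1_nonneg G hnorm k b
    _ ≤ (1 - Real.exp (-(t : ℝ) / b)) * f (edgesOf G C) := by gcongr
    _ ≤ f (edgesOf G (A t)) := hgreedy

/-- Vertex-Greedy guarantee. If `S` is produced by greedy vertex selection
(maximizing the marginal gain of `h(S) = f(edges(S))`), with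
`|S| ≥ min(b, ⌊k/Δ⌋)`, `|S| ≤ b` and `|edges(S)| ≤ k`, then
`f(edges(S)) ≥ (1 - exp(-min{b,⌊k/Δ⌋}/b)) · OPT₁`. -/
theorem stmt_18 (G : SimpleGraph V) [DecidableRel G.Adj] (f : Finset (Sym2 V) → ℝ)
    (hnn : ∀ F, 0 ≤ f F) (hnorm : f ∅ = 0)
    (hmono : ∀ A B : Finset (Sym2 V), A ⊆ B → f A ≤ f B)
    (hsub : ∀ A B : Finset (Sym2 V), f A + f B ≥ f (A ∪ B) + f (A ∩ B))
    (b k : ℕ) (hb : 0 < b) (hk : 0 < k) (hΔ : 1 ≤ G.maxDegree)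
    (t : ℕ) (A : ℕ → Finset V) (hA0 : A 0 = ∅)
    (hstep : ∀ i < t, ∃ a ∉ A i, A (i + 1) = insert a (A i) ∧
      ∀ a' ∉ A i, f (edgesOf G (insert a' (A i))) ≤ f (edgesOf G (insert a (A i))))
    (S : Finset V) (hSt : S = A t)
    (hcard_lb : min b (k / G.maxDegree) ≤ S.card) (hcard_ub : S.card ≤ b)
    (hedges : (edgesOf G S).card ≤ k) :
    f (edgesOf G S) ≥
      (1 - Real.exp (-((min b (k / G.maxDegree) : ℕ) : ℝ) / b)) * OPT1 G f k b :=
  stmt_18_general G f hnorm hmono hsub b k hb t A hA0 hstep S hSt hcard_lb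
end

section
/- Let G = (V, E) be a finite simple graph and f : 2^E → ℝ≥0 normalized, monotone, submodular, with b, k positive integers. Let F_grd ⊆ E be obtained by min(b,k) steps of greedy edge selection (each step adding an edge maximizing marginal gain of f). Then F_grd satisfies |F_grd| ≤ k, admits a vertex cover of size at most b, and f(F_grd) ≥ (1 - exp(-min{b,k}/k)) · OPT₁, where OPT₁ = max { f(F) : F ⊆ E, |F| ≤ k, ∃ vertex cover C of F with |C| ≤ b }. -/
open Finset
open scoped Classical

variable {V : Type*} [Fintype V] [DecidableEq V]

/-! Edge-Greedy is the classical greedy algorithm for a monotone submodular function under a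
cardinality constraint, run for `t = min b k` steps. Every feasible set `F*` of P₁ has at most `k`
elements, so submodularity bounds the gap `f F* - f Aᵢ` by `k` times the greedy gain of step `i`;
hence the gap shrinks by a factor `1 - 1/k ≤ exp (-1/k)` per step. Feasibility is cheap: `t ≤ k`
edges, and picking one endpoint of each gives a vertex cover with at most `t ≤ b` vertices. -/

section Submodular

variable {α : Type*} [DecidableEq α] {f : Finset α → ℝ}

theorem le_add_sum_marginal_of_submodular
    (hsub : ∀ A B : Finset α, f A + f B ≥ f (A ∪ B) + f (A ∩ B)) (S T : Finset α) :
    f (S ∪ T) ≤ f T + ∑ e ∈ S \ T, (f (insert e T) - f T) := by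
  induction S using Finset.induction_on with
  | empty => simp
  | @insert e S heS ih =>
    rw [insert_union]
    by_cases heT : e ∈ T
    · rwa [insert_eq_self.mpr (mem_union_right S heT), insert_sdiff_of_mem S heT]
    · rw [insert_sdiff_of_notMem S heT, sum_insert (by simp [heS])]
      have heST : e ∉ S ∪ T := by simp [heS, heT]
      have hcap : insert e T ∩ (S ∪ T) = T := by
        rw [insert_inter_of_notMem heST, inter_eq_left.mpr subset_union_right]
      have hcup : insert e T ∪ (S ∪ T) = insert e (S ∪ T) := by
        rw [insert_union, union_comm T, union_assoc, union_self]
      have := hsub (insert e T) (S ∪ T)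
      rw [hcap, hcup] at this
      linarith

theorem gap_insert_le_of_maximal_gain (hmono : ∀ A B : Finset α, A ⊆ B → f A ≤ f B)
    (hsub : ∀ A B : Finset α, f A + f B ≥ f (A ∪ B) + f (A ∩ B))
    {E S A : Finset α} {k : ℕ} {e : α} (hSE : S ⊆ E) (hSk : S.card ≤ k)
    (hgreedy : ∀ e' ∈ E \ A, f (insert e' A) ≤ f (insert e A)) :
    f S - f (insert e A) ≤ (1 - 1 / (k : ℝ)) * (f S - f A) := by
  set gain := f (insert e A) - f A
  have hgain : 0 ≤ gain := sub_nonneg.mpr (hmono _ _ (subset_insert e A))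
  have hgap : f S - f A ≤ k * gain := by
    have hterm : ∀ e' ∈ S \ A, f (insert e' A) - f A ≤ gain := fun e' he' =>
      sub_le_sub_right (hgreedy e' (sdiff_subset_sdiff hSE le_rfl he')) _
    have hcard : ((S \ A).card : ℝ) ≤ k := by
      exact_mod_cast (card_le_card sdiff_subset).trans hSk
    calc f S - f A ≤ f (S ∪ A) - f A := by gcongr; exact hmono _ _ subset_union_left
      _ ≤ ∑ e' ∈ S \ A, (f (insert e' A) - f A) := by
        linarith [le_add_sum_marginal_of_submodular hsub S A]
      _ ≤ (S \ A).card * gain := by simpa using sum_le_card_nsmul _ _ _ hterm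
      _ ≤ k * gain := by gcongr
  rcases k.eq_zero_or_pos with rfl | hk
  · simp only [CharP.cast_eq_zero, div_zero, sub_zero, one_mul]
    linarith
  · have : (f S - f A) / k ≤ gain := by
      rwa [div_le_iff₀ (by exact_mod_cast hk), mul_comm]
    linarith [show (1 - 1 / (k : ℝ)) * (f S - f A) = f S - f A - (f S - f A) / k by ring]

theorem gap_le_pow_of_greedy (hnn : ∀ F, 0 ≤ f F) (hmono : ∀ A B : Finset α, A ⊆ B → f A ≤ f B)
    (hsub : ∀ A B : Finset α, f A + f B ≥ f (A ∪ B) + f (A ∩ B))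
    {E S : Finset α} {k t : ℕ} {A : ℕ → Finset α} (hSE : S ⊆ E) (hSk : S.card ≤ k)
    (hstep : ∀ i < t, ∃ e ∈ E \ A i, A (i + 1) = insert e (A i) ∧
      ∀ e' ∈ E \ A i, f (insert e' (A i)) ≤ f (insert e (A i))) :
    f S - f (A t) ≤ (1 - 1 / (k : ℝ)) ^ t * f S := by
  have hgap : ∀ i ≤ t, f S - f (A i) ≤ (1 - 1 / (k : ℝ)) ^ i * f S := by
    intro i hi
    induction i with
    | zero => simpa using hnn (A 0)
    | succ i ih =>
      obtain ⟨e, -, hAe, hgreedy⟩ := hstep i (by omega)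
      calc f S - f (A (i + 1)) ≤ (1 - 1 / (k : ℝ)) * (f S - f (A i)) := by
            rw [hAe]; exact gap_insert_le_of_maximal_gain hmono hsub hSE hSk hgreedy
        _ ≤ (1 - 1 / (k : ℝ)) * ((1 - 1 / (k : ℝ)) ^ i * f S) := by
          gcongr
          · exact Nat.one_sub_one_div_cast_nonneg k
          · exact ih (by omega)
        _ = (1 - 1 / (k : ℝ)) ^ (i + 1) * f S := by ring
  exact hgap t le_rfl

end Submodular

theorem card_le_of_succ_eq_insert {α : Type*} [DecidableEq α] {A : ℕ → Finset α} {t : ℕ}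
    (hA0 : A 0 = ∅) (hstep : ∀ i < t, ∃ e, A (i + 1) = insert e (A i)) : (A t).card ≤ t := by
  suffices ∀ i ≤ t, (A i).card ≤ i from this t le_rfl
  intro i hi
  induction i with
  | zero => simp [hA0]
  | succ i ih =>
    obtain ⟨e, hAe⟩ := hstep i (by omega)
    rw [hAe]
    exact (card_insert_le e (A i)).trans (Nat.succ_le_succ (ih (by omega)))

-- For `k = 0` both sides are `1`, because `1 / 0 = 0`.
theorem one_sub_one_div_pow_le_exp (k t : ℕ) : (1 - 1 / (k : ℝ)) ^ t ≤ Real.exp (-(t : ℝ) / k) := by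
  calc (1 - 1 / (k : ℝ)) ^ t ≤ Real.exp (-(1 / (k : ℝ))) ^ t := by
        gcongr
        · exact Nat.one_sub_one_div_cast_nonneg k
        · linarith [Real.add_one_le_exp (-(1 / (k : ℝ)))]
    _ = Real.exp (-(t : ℝ) / k) := by rw [← Real.exp_nat_mul]; ring_nf

theorem exists_isVertexCover_card_le {α : Type*} (F : Finset (Sym2 α)) :
    ∃ C : Finset α, IsVertexCover C F ∧ C.card ≤ F.card :=
  ⟨F.image fun e => e.out.1, fun e he => ⟨e.out.1, mem_image_of_mem _ he, Sym2.out_fst_mem e⟩,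
    card_image_le⟩

theorem exists_subset_card_le_OPT1_eq {α : Type*} [Fintype α] (G : SimpleGraph α)
    [DecidableRel G.Adj] (f : Finset (Sym2 α) → ℝ) (k b : ℕ) :
    ∃ F ⊆ G.edgeFinset, F.card ≤ k ∧ OPT1 G f k b = f F := by
  have hne : (G.edgeFinset.powerset.filter
      (fun F => F.card ≤ k ∧ ∃ C : Finset α, C.card ≤ b ∧ IsVertexCover C F)).Nonempty :=
    ⟨∅, mem_filter.mpr ⟨empty_mem_powerset _, by simp, ∅, by simp, by simp [IsVertexCover]⟩⟩
  obtain ⟨F, hF, hOPT⟩ := exists_mem_eq_sup' hne f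
  simp only [mem_filter, mem_powerset] at hF
  exact ⟨F, hF.1, hF.2.1, hOPT⟩

theorem stmt_19_general (G : SimpleGraph V) [DecidableRel G.Adj] (f : Finset (Sym2 V) → ℝ)
    (hnn : ∀ F, 0 ≤ f F)
    (hmono : ∀ A B : Finset (Sym2 V), A ⊆ B → f A ≤ f B)
    (hsub : ∀ A B : Finset (Sym2 V), f A + f B ≥ f (A ∪ B) + f (A ∩ B))
    (b k : ℕ)
    (A : ℕ → Finset (Sym2 V)) (hA0 : A 0 = ∅)
    (hstep : ∀ i < min b k, ∃ e ∈ G.edgeFinset \ A i, A (i + 1) = insert e (A i) ∧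
      ∀ e' ∈ G.edgeFinset \ A i, f (insert e' (A i)) ≤ f (insert e (A i)))
    (Fgrd : Finset (Sym2 V)) (hFgrd : Fgrd = A (min b k)) :
    Fgrd.card ≤ k ∧
    (∃ C : Finset V, IsVertexCover C Fgrd ∧ C.card ≤ b) ∧
    f Fgrd ≥ (1 - Real.exp (-((min b k : ℕ) : ℝ) / k)) * OPT1 G f k b := by
  subst hFgrd
  have hcard : (A (min b k)).card ≤ min b k :=
    card_le_of_succ_eq_insert hA0 fun i hi => (hstep i hi).imp fun _ he => he.2.1
  obtain ⟨C, hC, hCcard⟩ := exists_isVertexCover_card_le (A (min b k))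
  refine ⟨hcard.trans (min_le_right b k), ⟨C, hC, by omega⟩, ?_⟩
  obtain ⟨S, hSE, hSk, hOPT⟩ := exists_subset_card_le_OPT1_eq G f k b
  have hgap := gap_le_pow_of_greedy hnn hmono hsub hSE hSk hstep
  have hexp := mul_le_mul_of_nonneg_right (one_sub_one_div_pow_le_exp k (min b k)) (hnn S)
  rw [hOPT, ge_iff_le]
  linarith

/-- Edge-Greedy guarantee. `min(b,k)` steps of greedy edge selection yield a
set `F_grd` with `|F_grd| ≤ k`, a vertex cover of size at most `b`, and
`f(F_grd) ≥ (1 - exp(-min{b,k}/k)) · OPT₁`. -/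
theorem stmt_19 (G : SimpleGraph V) [DecidableRel G.Adj] (f : Finset (Sym2 V) → ℝ)
    (hnn : ∀ F, 0 ≤ f F) (hnorm : f ∅ = 0)
    (hmono : ∀ A B : Finset (Sym2 V), A ⊆ B → f A ≤ f B)
    (hsub : ∀ A B : Finset (Sym2 V), f A + f B ≥ f (A ∪ B) + f (A ∩ B))
    (b k : ℕ) (hb : 0 < b) (hk : 0 < k)
    (A : ℕ → Finset (Sym2 V)) (hA0 : A 0 = ∅)
    (hstep : ∀ i < min b k, ∃ e ∈ G.edgeFinset \ A i, A (i + 1) = insert e (A i) ∧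
      ∀ e' ∈ G.edgeFinset \ A i, f (insert e' (A i)) ≤ f (insert e (A i)))
    (Fgrd : Finset (Sym2 V)) (hFgrd : Fgrd = A (min b k)) :
    Fgrd.card ≤ k ∧
    (∃ C : Finset V, IsVertexCover C Fgrd ∧ C.card ≤ b) ∧
    f Fgrd ≥ (1 - Real.exp (-((min b k : ℕ) : ℝ) / k)) * OPT1 G f k b :=
  stmt_19_general G f hnn hmono hsub b k A hA0 hstep Fgrd hFgrd
end
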